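/- arXiv:1706.06498 — 3 statements merged into one kernel-verified Lean document; each statement's English description precedes it below -/
import Mathlib

section
/- Let C ≠ 0 and D be real numbers, and let Ĉ, D̂ be real random variables on (Ω,𝒜,P) with Ĉ ≠ 0 almost surely, such that (C − Ĉ)² and (D − D̂)² are integrable. Set ρ̂ = D̂/Ĉ and suppose there is κ ≥ 0 with |ρ̂| ≤ κ almost surely. Then E[(D/C − ρ̂)²] ≤ (2/C²) · ( κ² · E[(C − Ĉ)²] + E[(D − D̂)²] ). -/
open MeasureTheory

/-- mean-square error bound for the plug-in ratio estimator `ρ̂ = D̂/Ĉ`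
of `ρ = D/C`. -/
theorem stmt6 {Ω : Type*} [MeasurableSpace Ω] (P : Measure Ω) [IsProbabilityMeasure P]
    (C D : ℝ) (hC : C ≠ 0) (Chat Dhat : Ω → ℝ)
    (hCm : Measurable Chat) (hDm : Measurable Dhat)
    (hChat : ∀ᵐ ω ∂P, Chat ω ≠ 0)
    (hint1 : Integrable (fun ω => (C - Chat ω) ^ 2) P)
    (hint2 : Integrable (fun ω => (D - Dhat ω) ^ 2) P)
    (κ : ℝ) (hκ : 0 ≤ κ) (hbound : ∀ᵐ ω ∂P, |Dhat ω / Chat ω| ≤ κ) :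
    ∫ ω, (D / C - Dhat ω / Chat ω) ^ 2 ∂P
      ≤ 2 / C ^ 2 * (κ ^ 2 * ∫ ω, (C - Chat ω) ^ 2 ∂P + ∫ ω, (D - Dhat ω) ^ 2 ∂P) := by
  have hC2 : (0:ℝ) < C ^ 2 := by positivity
  set g : Ω → ℝ := fun ω => 2 / C ^ 2 * (κ ^ 2 * (C - Chat ω) ^ 2 + (D - Dhat ω) ^ 2) with hg
  have hgi : Integrable g P := ((hint1.const_mul (κ ^ 2)).add hint2).const_mul _
  have hle : (fun ω => (D / C - Dhat ω / Chat ω) ^ 2) ≤ᵐ[P] g := by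
    filter_upwards [hChat, hbound] with ω hc hb
    have hr2 : (Dhat ω / Chat ω) ^ 2 ≤ κ ^ 2 := by
      have := sq_abs (Dhat ω / Chat ω)
      nlinarith [abs_nonneg (Dhat ω / Chat ω)]
    have key : D / C - Dhat ω / Chat ω
        = ((D - Dhat ω) + (Dhat ω / Chat ω) * (Chat ω - C)) / C := by
      field_simp
      ring
    simp only [hg]
    rw [key, div_pow, show (2:ℝ) / C ^ 2 * (κ ^ 2 * (C - Chat ω) ^ 2 + (D - Dhat ω) ^ 2)
      = 2 * (κ ^ 2 * (C - Chat ω) ^ 2 + (D - Dhat ω) ^ 2) / C ^ 2 from by ring]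
    gcongr ?_ / _
    set x := D - Dhat ω
    set r := Dhat ω / Chat ω
    set y := Chat ω - C
    have hy : (C - Chat ω) ^ 2 = y ^ 2 := by simp only [y]; ring
    rw [hy]
    nlinarith [sq_nonneg (x - r * y), sq_nonneg y, hr2, sq_nonneg (x + r * y)]
  have hint : ∫ ω, g ω ∂P
      = 2 / C ^ 2 * (κ ^ 2 * ∫ ω, (C - Chat ω) ^ 2 ∂P + ∫ ω, (D - Dhat ω) ^ 2 ∂P) := by
    rw [hg]
    rw [integral_const_mul]
    rw [integral_add (hint1.const_mul _) hint2, integral_const_mul]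
  calc ∫ ω, (D / C - Dhat ω / Chat ω) ^ 2 ∂P ≤ ∫ ω, g ω ∂P := by
        apply integral_mono_of_nonneg _ hgi hle
        filter_upwards with ω using sq_nonneg _
    _ = _ := hint
end

section
/- In the coordinate ARH(1) estimation model, for every n ≥ 2 the quantity E‖ρ − ρ̂_{k_n}‖²_{S(H)} = Σ_{j=1}^{k_n} E[(ρ_j − ρ̂_{n,j})²] + Σ_{j=k_n+1}^{∞} ρ_j² is bounded above by g(n) := ( 2 S (n/(n−1))² / (C_{k_n}² n) ) · Σ_{j=1}^{k_n} C_j² + Σ_{j=k_n+1}^{∞} ρ_j², and lim_{n→∞} [ Σ_{j=1}^{k_n} E[(ρ_j − ρ̂_{n,j})²] + Σ_{j=k_n+1}^{∞} ρ_j² ] = 0. -/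
open MeasureTheory Filter

/-- The componentwise moment-based estimator
`ρ̂_{n,j} = (n/(n-1)) · (Σ_{i=0}^{n-2} η_j(i) η_j(i+1)) / (Σ_{i=0}^{n-1} η_j(i)²)`. -/
noncomputable def rhoHat {Ω : Type*} (η : ℕ → ℕ → Ω → ℝ) (n j : ℕ) (ω : Ω) : ℝ :=
  (n : ℝ) / ((n : ℝ) - 1) *
    (∑ i ∈ Finset.range (n - 1), η j i ω * η j (i + 1) ω) /
    ∑ i ∈ Finset.range n, η j i ω ^ 2

/-! Write `ρ̂_{n,j} = c_n T / U` with `c_n = n/(n-1)`, where `T/(n-1)` and `U/n` are the empirical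
lag-one and lag-zero moments of `η_j`. Cauchy–Schwarz gives `|T| ≤ U`, hence `|ρ̂_{n,j}| ≤ c_n`, and
`ρ_j - ρ̂_{n,j} = (ρ_j - T/(n-1)) - ρ̂_{n,j} (1 - U/n)`; so by A4 each coordinate has mean squared
error at most `2 S c_n² / n`, and since `C_{k_n} ≤ C_j` for `j ≤ k_n` the sum over `j ≤ k_n` is at
most `g(n)`. As `Σ C_j² < ∞` (because `C_j ≤ C_1`), A3 sends the first term of `g(n)` to `0`, and the
tail `Σ_{j>k_n} ρ_j²` vanishes because `k_n → ∞`. -/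

open Topology Finset

lemma abs_sum_range_mul_succ_le_sum_sq (f : ℕ → ℝ) (n : ℕ) :
    |∑ i ∈ range (n - 1), f i * f (i + 1)| ≤ ∑ i ∈ range n, f i ^ 2 := by
  rcases n with _ | m
  · simp
  have hfirst : ∑ i ∈ range m, f i ^ 2 ≤ ∑ i ∈ range (m + 1), f i ^ 2 := by
    rw [sum_range_succ]; linarith [sq_nonneg (f m)]
  have hshift : ∑ i ∈ range m, f (i + 1) ^ 2 ≤ ∑ i ∈ range (m + 1), f i ^ 2 := by
    rw [sum_range_succ']; linarith [sq_nonneg (f 0)]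
  have hsq := sum_mul_sq_le_sq_mul_sq (range m) f (fun i => f (i + 1))
  refine abs_le_of_sq_le_sq ?_ (by positivity)
  calc (∑ i ∈ range (m + 1 - 1), f i * f (i + 1)) ^ 2
      ≤ (∑ i ∈ range m, f i ^ 2) * ∑ i ∈ range m, f (i + 1) ^ 2 := by simpa using hsq
    _ ≤ (∑ i ∈ range (m + 1), f i ^ 2) ^ 2 := by
      rw [sq]; exact mul_le_mul hfirst hshift (by positivity) (by positivity)

lemma sq_sub_ratio_le {m x T U : ℝ} (hm : m ≠ 0) (hm1 : m - 1 ≠ 0) (hU : 0 < U)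
    (hTU : |T| ≤ U) :
    (x - m / (m - 1) * T / U) ^ 2
      ≤ 2 * (x - 1 / (m - 1) * T) ^ 2 + 2 * (m / (m - 1)) ^ 2 * (1 - 1 / m * U) ^ 2 := by
  set r := m / (m - 1) * T / U
  have hr : r ^ 2 ≤ (m / (m - 1)) ^ 2 := by
    rw [← sq_abs r, ← sq_abs (m / (m - 1))]
    refine pow_le_pow_left₀ (abs_nonneg r) ?_ 2
    rw [abs_div, abs_mul, abs_of_pos hU, div_le_iff₀ hU]
    exact mul_le_mul_of_nonneg_left hTU (abs_nonneg _)
  have hsplit : x - r = (x - 1 / (m - 1) * T) - r * (1 - 1 / m * U) := by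
    simp only [r]; field_simp; ring
  calc (x - r) ^ 2 = ((x - 1 / (m - 1) * T) + -(r * (1 - 1 / m * U))) ^ 2 := by
        rw [hsplit, sub_eq_add_neg]
    _ ≤ 2 * ((x - 1 / (m - 1) * T) ^ 2 + (-(r * (1 - 1 / m * U))) ^ 2) := add_sq_le
    _ = 2 * (x - 1 / (m - 1) * T) ^ 2 + 2 * r ^ 2 * (1 - 1 / m * U) ^ 2 := by ring
    _ ≤ _ := by gcongr

lemma integral_sq_sub_ratio_le {Ω : Type*} [MeasurableSpace Ω] {P : Measure Ω} {m x : ℝ}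
    {T U : Ω → ℝ} (hm : m ≠ 0) (hm1 : m - 1 ≠ 0) (hU : ∀ᵐ ω ∂P, 0 < U ω)
    (hTU : ∀ᵐ ω ∂P, |T ω| ≤ U ω)
    (hTint : Integrable (fun ω => (x - 1 / (m - 1) * T ω) ^ 2) P)
    (hUint : Integrable (fun ω => (1 - 1 / m * U ω) ^ 2) P) :
    ∫ ω, (x - m / (m - 1) * T ω / U ω) ^ 2 ∂P
      ≤ 2 * ∫ ω, (x - 1 / (m - 1) * T ω) ^ 2 ∂P
        + 2 * (m / (m - 1)) ^ 2 * ∫ ω, (1 - 1 / m * U ω) ^ 2 ∂P := by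
  rw [← integral_const_mul, ← integral_const_mul,
    ← integral_add (hTint.const_mul _) (hUint.const_mul _)]
  refine integral_mono_of_nonneg (.of_forall fun ω => sq_nonneg _)
    ((hTint.const_mul _).add (hUint.const_mul _)) ?_
  filter_upwards [hU, hTU] with ω hUω hTUω
  exact sq_sub_ratio_le hm hm1 hUω hTUω

lemma integral_sq_sub_rhoHat_le {Ω : Type*} [MeasurableSpace Ω] {P : Measure Ω}
    (η : ℕ → ℕ → Ω → ℝ) {n j : ℕ} {x K₁ K₂ : ℝ} (hn : 2 ≤ n)
    (hpos : ∀ᵐ ω ∂P, 0 < ∑ i ∈ range n, η j i ω ^ 2) (hK₂ : 0 ≤ K₂)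
    (h₁int : Integrable (fun ω => (1 - 1 / (n : ℝ) * ∑ i ∈ range n, η j i ω ^ 2) ^ 2) P)
    (h₁ : ∫ ω, (1 - 1 / (n : ℝ) * ∑ i ∈ range n, η j i ω ^ 2) ^ 2 ∂P ≤ K₁ / n)
    (h₂int : Integrable (fun ω => (x - 1 / ((n : ℝ) - 1) *
      ∑ i ∈ range (n - 1), η j i ω * η j (i + 1) ω) ^ 2) P)
    (h₂ : ∫ ω, (x - 1 / ((n : ℝ) - 1) *
      ∑ i ∈ range (n - 1), η j i ω * η j (i + 1) ω) ^ 2 ∂P ≤ K₂ / n) :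
    ∫ ω, (x - rhoHat η n j ω) ^ 2 ∂P ≤ 2 * (K₁ + K₂) * ((n : ℝ) / ((n : ℝ) - 1)) ^ 2 / n := by
  have hn' : (2 : ℝ) ≤ n := by exact_mod_cast hn
  have hc : 1 ≤ ((n : ℝ) / ((n : ℝ) - 1)) ^ 2 :=
    one_le_pow₀ ((one_le_div (by linarith)).2 (by linarith))
  calc ∫ ω, (x - rhoHat η n j ω) ^ 2 ∂P
      ≤ 2 * (K₂ / n) + 2 * ((n : ℝ) / ((n : ℝ) - 1)) ^ 2 * (K₁ / n) := by
        refine (integral_sq_sub_ratio_le (by positivity) (by linarith) hpos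
          (.of_forall fun ω => abs_sum_range_mul_succ_le_sum_sq (η j · ω) n) h₂int h₁int).trans ?_
        gcongr
    _ ≤ 2 * (((n : ℝ) / ((n : ℝ) - 1)) ^ 2 * (K₂ / n))
          + 2 * ((n : ℝ) / ((n : ℝ) - 1)) ^ 2 * (K₁ / n) := by
        gcongr
        exact le_mul_of_one_le_left (by positivity) hc
    _ = 2 * (K₁ + K₂) * ((n : ℝ) / ((n : ℝ) - 1)) ^ 2 / n := by ring

lemma sum_le_div_sq_mul_sum_sq {ι : Type*} (s : Finset ι) {e C : ι → ℝ} {a c : ℝ} (ha : 0 ≤ a)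
    (hc : ∀ i ∈ s, 0 < c ∧ c ≤ C i) (he : ∀ i ∈ s, e i ≤ a) :
    ∑ i ∈ s, e i ≤ a / c ^ 2 * ∑ i ∈ s, C i ^ 2 := by
  rw [mul_sum]
  refine sum_le_sum fun i hi => (he i hi).trans ?_
  obtain ⟨hc0, hcC⟩ := hc i hi
  rw [div_mul_eq_mul_div, le_div_iff₀ (by positivity)]
  gcongr

lemma tendsto_sum_Icc_one_sq {C : ℕ → ℝ} (hCpos : ∀ j, 1 ≤ j → 0 < C j)
    (hCmono : ∀ i j : ℕ, 1 ≤ i → i ≤ j → C j ≤ C i) (hCsum : Summable fun j : ℕ => C (j + 1)) :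
    Tendsto (fun m => ∑ j ∈ Icc 1 m, C j ^ 2) atTop (𝓝 (∑' j : ℕ, C (j + 1) ^ 2)) := by
  have hsq : Summable fun j : ℕ => C (j + 1) ^ 2 := by
    refine (hCsum.mul_left (C 1)).of_nonneg_of_le (fun j => sq_nonneg _) fun j => ?_
    rw [sq]
    exact mul_le_mul_of_nonneg_right (hCmono 1 (j + 1) le_rfl (by omega))
      (hCpos (j + 1) (by omega)).le
  refine hsq.tendsto_sum_tsum_nat.congr fun m => ?_
  rw [← Ico_add_one_right_eq_Icc, sum_Ico_eq_sum_range, Nat.add_sub_cancel]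
  simp only [add_comm 1]

-- The bound `g(n)` of the paper, evaluated at `k = k_n`.
noncomputable def errorBound (S : ℝ) (C ρ : ℕ → ℝ) (k n : ℕ) : ℝ :=
  2 * S * ((n : ℝ) / ((n : ℝ) - 1)) ^ 2 / (C k ^ 2 * n) * (∑ j ∈ Icc 1 k, C j ^ 2)
    + ∑' j : ℕ, ρ (k + 1 + j) ^ 2

lemma tendsto_errorBound (S : ℝ) {C : ℕ → ℝ} (ρ : ℕ → ℝ) {k : ℕ → ℕ}
    (hCpos : ∀ j, 1 ≤ j → 0 < C j) (hCmono : ∀ i j : ℕ, 1 ≤ i → i ≤ j → C j ≤ C i)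
    (hCsum : Summable fun j : ℕ => C (j + 1)) (hk : Tendsto k atTop atTop)
    (hA3 : Tendsto (fun n : ℕ => (n : ℝ) * C (k n) ^ 2) atTop atTop) :
    Tendsto (fun n => errorBound S C ρ (k n) n) atTop (𝓝 0) := by
  have hratio : Tendsto (fun n : ℕ => ((n : ℝ) / ((n : ℝ) - 1)) ^ 2) atTop (𝓝 1) := by
    simpa [← sub_eq_add_neg] using (tendsto_natCast_div_add_atTop (-1 : ℝ)).pow 2
  have htail : Tendsto (fun m => ∑' j : ℕ, ρ (m + 1 + j) ^ 2) atTop (𝓝 0) :=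
    (tendsto_sum_nat_add fun j => ρ (j + 1) ^ 2).congr fun m =>
      tsum_congr fun j => by ring_nf
  have h := (((hratio.const_mul (2 * S)).mul hA3.inv_tendsto_atTop).mul
    ((tendsto_sum_Icc_one_sq hCpos hCmono hCsum).comp hk)).add (htail.comp hk)
  rw [mul_one, mul_zero, zero_mul, zero_add] at h
  refine h.congr fun n => ?_
  simp only [errorBound, Pi.inv_apply, Function.comp_apply]
  rw [div_eq_mul_inv _ (C (k n) ^ 2 * n), mul_comm (C (k n) ^ 2)]

theorem stmt9_general {Ω : Type*} [MeasurableSpace Ω] (P : Measure Ω)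
    (C : ℕ → ℝ) (hCpos : ∀ j, 1 ≤ j → 0 < C j)
    (hCmono : ∀ i j : ℕ, 1 ≤ i → i ≤ j → C j ≤ C i)
    (hCsum : Summable fun j : ℕ => C (j + 1))
    (ρ : ℕ → ℝ)
    (η : ℕ → ℕ → Ω → ℝ)
    (hpos : ∀ j n : ℕ, 1 ≤ j → 1 ≤ n →
      ∀ᵐ ω ∂P, 0 < ∑ i ∈ Finset.range n, η j i ω ^ 2)
    (K1 K2 : ℕ → ℝ) (hK1 : ∀ j, 0 ≤ K1 j) (hK2 : ∀ j, 0 ≤ K2 j)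
    (S : ℝ) (hS : ∀ j, 1 ≤ j → K1 j + K2 j ≤ S)
    (hA41int : ∀ n j : ℕ, 2 ≤ n → 1 ≤ j → Integrable
      (fun ω => (1 - 1 / (n : ℝ) * ∑ i ∈ Finset.range n, η j i ω ^ 2) ^ 2) P)
    (hA41 : ∀ n j : ℕ, 2 ≤ n → 1 ≤ j →
      ∫ ω, (1 - 1 / (n : ℝ) * ∑ i ∈ Finset.range n, η j i ω ^ 2) ^ 2 ∂P ≤ K1 j / n)
    (hA42int : ∀ n j : ℕ, 2 ≤ n → 1 ≤ j → Integrable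
      (fun ω => (ρ j - 1 / ((n : ℝ) - 1) *
        ∑ i ∈ Finset.range (n - 1), η j i ω * η j (i + 1) ω) ^ 2) P)
    (hA42 : ∀ n j : ℕ, 2 ≤ n → 1 ≤ j →
      ∫ ω, (ρ j - 1 / ((n : ℝ) - 1) *
        ∑ i ∈ Finset.range (n - 1), η j i ω * η j (i + 1) ω) ^ 2 ∂P ≤ K2 j / n)
    (k : ℕ → ℕ) (hk : Tendsto k atTop atTop)
    (hA3 : Tendsto (fun n : ℕ => (n : ℝ) * C (k n) ^ 2) atTop atTop) :
    (∀ n : ℕ, 2 ≤ n →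
      (∑ j ∈ Finset.Icc 1 (k n), ∫ ω, (ρ j - rhoHat η n j ω) ^ 2 ∂P)
          + ∑' j : ℕ, ρ (k n + 1 + j) ^ 2
        ≤ 2 * S * ((n : ℝ) / ((n : ℝ) - 1)) ^ 2 / (C (k n) ^ 2 * n) *
              (∑ j ∈ Finset.Icc 1 (k n), C j ^ 2)
            + ∑' j : ℕ, ρ (k n + 1 + j) ^ 2) ∧
    Tendsto (fun n : ℕ =>
        (∑ j ∈ Finset.Icc 1 (k n), ∫ ω, (ρ j - rhoHat η n j ω) ^ 2 ∂P)
          + ∑' j : ℕ, ρ (k n + 1 + j) ^ 2)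
      atTop (nhds 0) := by
  have hS0 : 0 ≤ S := (add_nonneg (hK1 1) (hK2 1)).trans (hS 1 le_rfl)
  have hbound : ∀ n : ℕ, 2 ≤ n →
      (∑ j ∈ Icc 1 (k n), ∫ ω, (ρ j - rhoHat η n j ω) ^ 2 ∂P) + ∑' j : ℕ, ρ (k n + 1 + j) ^ 2
        ≤ errorBound S C ρ (k n) n := by
    intro n hn
    have hcoord : ∀ j ∈ Icc 1 (k n), ∫ ω, (ρ j - rhoHat η n j ω) ^ 2 ∂P
        ≤ 2 * S * ((n : ℝ) / ((n : ℝ) - 1)) ^ 2 / n := by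
      intro j hj
      have hj1 := (mem_Icc.1 hj).1
      calc _ ≤ 2 * (K1 j + K2 j) * ((n : ℝ) / ((n : ℝ) - 1)) ^ 2 / n :=
            integral_sq_sub_rhoHat_le η hn (hpos j n hj1 (by omega)) (hK2 j)
              (hA41int n j hn hj1) (hA41 n j hn hj1) (hA42int n j hn hj1) (hA42 n j hn hj1)
        _ ≤ _ := by gcongr; exact hS j hj1
    have hC : ∀ j ∈ Icc 1 (k n), 0 < C (k n) ∧ C (k n) ≤ C j := fun j hj => by
      obtain ⟨hj1, hjk⟩ := mem_Icc.1 hj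
      exact ⟨hCpos _ (hj1.trans hjk), hCmono j _ hj1 hjk⟩
    have hsum := sum_le_div_sq_mul_sum_sq _ (by positivity) hC hcoord
    rw [div_div, mul_comm (n : ℝ)] at hsum
    exact add_le_add_left hsum _
  refine ⟨hbound, squeeze_zero' (.of_forall fun n => ?_) ((eventually_ge_atTop 2).mono hbound)
    (tendsto_errorBound S ρ hCpos hCmono hCsum hk hA3)⟩
  exact add_nonneg (sum_nonneg fun j _ => integral_nonneg fun ω => sq_nonneg _)
    (tsum_nonneg fun j => sq_nonneg _)

/-- in the coordinate ARH(1) estimation model, the squared Hilbert–Schmidt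
error `Σ_{j=1}^{k_n} E[(ρ_j − ρ̂_{n,j})²] + Σ_{j>k_n} ρ_j²` is bounded by `g(n)` and tends
to `0`. -/
theorem stmt9 {Ω : Type*} [MeasurableSpace Ω] (P : Measure Ω) [IsProbabilityMeasure P]
    (C : ℕ → ℝ) (hCpos : ∀ j, 1 ≤ j → 0 < C j)
    (hCmono : ∀ i j : ℕ, 1 ≤ i → i ≤ j → C j ≤ C i)
    (hCsum : Summable fun j : ℕ => C (j + 1))
    (ρ : ℕ → ℝ) (hρ2 : Summable fun j : ℕ => ρ (j + 1) ^ 2)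
    (η : ℕ → ℕ → Ω → ℝ) (hηm : ∀ j i, Measurable (η j i))
    (hpos : ∀ j n : ℕ, 1 ≤ j → 1 ≤ n →
      ∀ᵐ ω ∂P, 0 < ∑ i ∈ Finset.range n, η j i ω ^ 2)
    (K1 K2 : ℕ → ℝ) (hK1 : ∀ j, 0 ≤ K1 j) (hK2 : ∀ j, 0 ≤ K2 j)
    (S : ℝ) (hS : ∀ j, 1 ≤ j → K1 j + K2 j ≤ S)
    (hA41int : ∀ n j : ℕ, 2 ≤ n → 1 ≤ j → Integrable
      (fun ω => (1 - 1 / (n : ℝ) * ∑ i ∈ Finset.range n, η j i ω ^ 2) ^ 2) P)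
    (hA41 : ∀ n j : ℕ, 2 ≤ n → 1 ≤ j →
      ∫ ω, (1 - 1 / (n : ℝ) * ∑ i ∈ Finset.range n, η j i ω ^ 2) ^ 2 ∂P ≤ K1 j / n)
    (hA42int : ∀ n j : ℕ, 2 ≤ n → 1 ≤ j → Integrable
      (fun ω => (ρ j - 1 / ((n : ℝ) - 1) *
        ∑ i ∈ Finset.range (n - 1), η j i ω * η j (i + 1) ω) ^ 2) P)
    (hA42 : ∀ n j : ℕ, 2 ≤ n → 1 ≤ j →
      ∫ ω, (ρ j - 1 / ((n : ℝ) - 1) *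
        ∑ i ∈ Finset.range (n - 1), η j i ω * η j (i + 1) ω) ^ 2 ∂P ≤ K2 j / n)
    (k : ℕ → ℕ) (hk : Tendsto k atTop atTop)
    (hA3 : Tendsto (fun n : ℕ => (n : ℝ) * C (k n) ^ 2) atTop atTop) :
    (∀ n : ℕ, 2 ≤ n →
      (∑ j ∈ Finset.Icc 1 (k n), ∫ ω, (ρ j - rhoHat η n j ω) ^ 2 ∂P)
          + ∑' j : ℕ, ρ (k n + 1 + j) ^ 2
        ≤ 2 * S * ((n : ℝ) / ((n : ℝ) - 1)) ^ 2 / (C (k n) ^ 2 * n) *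
              (∑ j ∈ Finset.Icc 1 (k n), C j ^ 2)
            + ∑' j : ℕ, ρ (k n + 1 + j) ^ 2) ∧
    Tendsto (fun n : ℕ =>
        (∑ j ∈ Finset.Icc 1 (k n), ∫ ω, (ρ j - rhoHat η n j ω) ^ 2 ∂P)
          + ∑' j : ℕ, ρ (k n + 1 + j) ^ 2)
      atTop (nhds 0) :=
  stmt9_general P C hCpos hCmono hCsum ρ η hpos K1 K2 hK1 hK2 S hS hA41int hA41 hA42int hA42 k hk
    hA3
end

section
/- In the coordinate ARH(1) estimation model, the real random variables Z_n := Σ_{j=1}^{k_n} (ρ_j − ρ̂_{n,j})² + Σ_{j=k_n+1}^{∞} ρ_j² (n ≥ 2), which equal the squared Hilbert–Schmidt norm ‖ρ − ρ̂_{k_n}‖²_{S(H)}, converge to 0 in probability as n → ∞; that is, for every ε > 0, lim_{n→∞} P(Z_n > ε) = 0. -/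
/-!
Write `V_j = (1/n) Σ η_j(i)²` and `R_j = (1/(n-1)) Σ η_j(i) η_j(i+1)`, so that
`ρ̂_{n,j} = R_j / V_j`, and A4 says `E(1 - V_j)² ≤ S/n` and `E(ρ_j - R_j)² ≤ S/n`. Where
`|1 - V_j| ≤ 1/2` the error is controlled without dividing by a small number:
`(ρ_j - R_j/V_j)² ≤ 8 (ρ_j² (1 - V_j)² + (ρ_j - R_j)²)`. Chebyshev bounds the probability that
some `|1 - V_j| > 1/2`, Markov the probability that the controlled sum is large, and both bounds
are `O(k_n / n)`. Finally `j C_j ≤ Σ C` turns A3 into `k_n² / n → 0`, and the tail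
`Σ_{j > k_n} ρ_j²` is eventually below `ε/2`.
-/

open MeasureTheory Filter

open Topology

noncomputable def empVar {Ω : Type*} (η : ℕ → ℕ → Ω → ℝ) (n j : ℕ) (ω : Ω) : ℝ :=
  1 / (n : ℝ) * ∑ i ∈ Finset.range n, η j i ω ^ 2

noncomputable def empCov {Ω : Type*} (η : ℕ → ℕ → Ω → ℝ) (n j : ℕ) (ω : Ω) : ℝ :=
  1 / ((n : ℝ) - 1) * ∑ i ∈ Finset.range (n - 1), η j i ω * η j (i + 1) ω

theorem rhoHat_eq_empCov_div_empVar {Ω : Type*} (η : ℕ → ℕ → Ω → ℝ) (n j : ℕ) (ω : Ω) :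
    rhoHat η n j ω = empCov η n j ω / empVar η n j ω := by
  unfold rhoHat empCov empVar
  simp only [div_eq_mul_inv, mul_inv, inv_inv]
  ring

theorem sq_sub_div_le_of_sq_one_sub_le {ρ a d : ℝ} (hd : (1 - d) ^ 2 ≤ 1 / 4) :
    (ρ - a / d) ^ 2 ≤ 8 * (ρ ^ 2 * (1 - d) ^ 2 + (ρ - a) ^ 2) := by
  have hd_half : 1 / 2 ≤ d := by nlinarith
  have hd_sq : 1 / 4 ≤ d ^ 2 := by nlinarith
  have hmul : (ρ - a / d) * d = (ρ - a) - ρ * (1 - d) := by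
    field_simp
    ring
  have hmul_sq : (ρ - a / d) ^ 2 * d ^ 2 ≤ 2 * (ρ ^ 2 * (1 - d) ^ 2 + (ρ - a) ^ 2) := by
    rw [← mul_pow, hmul]
    nlinarith [sq_nonneg ((ρ - a) + ρ * (1 - d))]
  nlinarith [sq_nonneg (ρ - a / d)]

theorem nat_mul_le_tsum_of_antitone {C : ℕ → ℝ} (hCpos : ∀ j, 1 ≤ j → 0 < C j)
    (hCmono : ∀ i j : ℕ, 1 ≤ i → i ≤ j → C j ≤ C i)
    (hCsum : Summable fun j : ℕ => C (j + 1)) (j : ℕ) :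
    j * C j ≤ ∑' i, C (i + 1) :=
  calc (j : ℝ) * C j = ∑ _i ∈ Finset.range j, C j := by simp
    _ ≤ ∑ i ∈ Finset.range j, C (i + 1) :=
      Finset.sum_le_sum fun i hi => hCmono _ _ (by omega) (by simp at hi; omega)
    _ ≤ ∑' i, C (i + 1) := hCsum.sum_le_tsum _ fun i _ => (hCpos _ (by omega)).le

theorem tendsto_div_atTop_zero_of_tendsto_mul_sq {C : ℕ → ℝ} (hCpos : ∀ j, 1 ≤ j → 0 < C j)
    (hCmono : ∀ i j : ℕ, 1 ≤ i → i ≤ j → C j ≤ C i)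
    (hCsum : Summable fun j : ℕ => C (j + 1)) {k : ℕ → ℕ}
    (hA3 : Tendsto (fun n : ℕ => (n : ℝ) * C (k n) ^ 2) atTop atTop) :
    Tendsto (fun n : ℕ => (k n : ℝ) / n) atTop (𝓝 0) := by
  set T := ∑' i, C (i + 1)
  have hbound : Tendsto (fun n : ℕ => T ^ 2 / (n * C (k n) ^ 2)) atTop (𝓝 0) :=
    tendsto_const_nhds.div_atTop hA3
  refine squeeze_zero' (Eventually.of_forall fun n => by positivity) ?_ hbound
  filter_upwards [eventually_ge_atTop 1] with n hn
  rcases Nat.eq_zero_or_pos (k n) with hk0 | hk_pos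
  · rw [hk0, Nat.cast_zero, zero_div]
    positivity
  have hC : 0 < C (k n) := hCpos _ hk_pos
  have hkC : (k n : ℝ) * C (k n) ≤ T := nat_mul_le_tsum_of_antitone hCpos hCmono hCsum (k n)
  have hn_pos : (0 : ℝ) < n := by exact_mod_cast hn
  have hk_one : (1 : ℝ) ≤ k n := by exact_mod_cast hk_pos
  calc (k n : ℝ) / n ≤ (k n * C (k n)) ^ 2 / (n * C (k n) ^ 2) := by
        rw [mul_pow, mul_div_mul_right _ _ (by positivity)]
        gcongr
        nlinarith
    _ ≤ T ^ 2 / (n * C (k n) ^ 2) := by gcongr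

theorem tendsto_tsum_comp_add_one_add {f : ℕ → ℝ} {k : ℕ → ℕ} (hk : Tendsto k atTop atTop) :
    Tendsto (fun n => ∑' j : ℕ, f (k n + 1 + j)) atTop (𝓝 0) := by
  refine ((tendsto_sum_nat_add fun j => f (j + 1)).comp hk).congr fun n => ?_
  exact tsum_congr fun j => by simp only [add_right_comm, add_comm j]

section Markov

variable {Ω ι : Type*} [MeasurableSpace Ω] {P : Measure Ω}

theorem measureReal_lt_le_integral_div [IsFiniteMeasure P] {f : Ω → ℝ}
    (hf_nonneg : ∀ ω, 0 ≤ f ω) (hf : Integrable f P) {c : ℝ} (hc : 0 < c) :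
    P.real {ω | c < f ω} ≤ (∫ ω, f ω ∂P) / c := by
  rw [le_div_iff₀ hc, mul_comm]
  calc c * P.real {ω | c < f ω} ≤ c * P.real {ω | c ≤ f ω} :=
        mul_le_mul_of_nonneg_left
          (measureReal_mono (Set.ofPred_subset_ofPred.2 fun _ => le_of_lt)) hc.le
    _ ≤ ∫ ω, f ω ∂P := mul_meas_ge_le_integral_of_nonneg (ae_of_all _ hf_nonneg) hf c

theorem measureReal_biUnion_lt_le [IsFiniteMeasure P] (s : Finset ι) {f : ι → Ω → ℝ}
    (hf_nonneg : ∀ j ω, 0 ≤ f j ω) (hf : ∀ j ∈ s, Integrable (f j) P) {a c : ℝ} (hc : 0 < c)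
    (hfa : ∀ j ∈ s, ∫ ω, f j ω ∂P ≤ a) :
    P.real (⋃ j ∈ s, {ω | c < f j ω}) ≤ s.card * (a / c) :=
  calc P.real (⋃ j ∈ s, {ω | c < f j ω}) ≤ ∑ j ∈ s, P.real {ω | c < f j ω} :=
        measureReal_biUnion_finset_le _ _
    _ ≤ ∑ _j ∈ s, a / c := Finset.sum_le_sum fun j hj =>
        (measureReal_lt_le_integral_div (hf_nonneg j) (hf j hj) hc).trans
          (div_le_div_of_nonneg_right (hfa j hj) hc.le)
    _ = s.card * (a / c) := by simp

theorem integral_sum_sq_deviation_le (s : Finset ι) (ρ : ι → ℝ) (V R : ι → Ω → ℝ) {a M : ℝ}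
    (hVint : ∀ j ∈ s, Integrable (fun ω => (1 - V j ω) ^ 2) P)
    (hRint : ∀ j ∈ s, Integrable (fun ω => (ρ j - R j ω) ^ 2) P)
    (hV : ∀ j ∈ s, ∫ ω, (1 - V j ω) ^ 2 ∂P ≤ a)
    (hR : ∀ j ∈ s, ∫ ω, (ρ j - R j ω) ^ 2 ∂P ≤ a)
    (hρ : ∀ j ∈ s, ρ j ^ 2 ≤ M) :
    ∫ ω, ∑ j ∈ s, (ρ j ^ 2 * (1 - V j ω) ^ 2 + (ρ j - R j ω) ^ 2) ∂P
      ≤ s.card * ((M + 1) * a) := by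
  have hint : ∀ j ∈ s,
      Integrable (fun ω => ρ j ^ 2 * (1 - V j ω) ^ 2 + (ρ j - R j ω) ^ 2) P :=
    fun j hj => ((hVint j hj).const_mul _).add (hRint j hj)
  rw [integral_finsetSum _ hint]
  calc ∑ j ∈ s, ∫ ω, (ρ j ^ 2 * (1 - V j ω) ^ 2 + (ρ j - R j ω) ^ 2) ∂P
      ≤ ∑ _j ∈ s, (M + 1) * a := Finset.sum_le_sum fun j hj => by
        rw [integral_add ((hVint j hj).const_mul _) (hRint j hj), integral_const_mul]
        have hV_nonneg : 0 ≤ ∫ ω, (1 - V j ω) ^ 2 ∂P := integral_nonneg fun ω => sq_nonneg _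
        nlinarith [hV j hj, hR j hj, hρ j hj, sq_nonneg (ρ j)]
    _ = s.card * ((M + 1) * a) := by simp

theorem measureReal_sum_sq_sub_div_gt_le [IsFiniteMeasure P] (s : Finset ι) (ρ : ι → ℝ)
    (V R : ι → Ω → ℝ) {a M : ℝ}
    (hVint : ∀ j ∈ s, Integrable (fun ω => (1 - V j ω) ^ 2) P)
    (hRint : ∀ j ∈ s, Integrable (fun ω => (ρ j - R j ω) ^ 2) P)
    (hV : ∀ j ∈ s, ∫ ω, (1 - V j ω) ^ 2 ∂P ≤ a)
    (hR : ∀ j ∈ s, ∫ ω, (ρ j - R j ω) ^ 2 ∂P ≤ a)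
    (hρ : ∀ j ∈ s, ρ j ^ 2 ≤ M)
    {ε t : ℝ} (hε : 0 < ε) (ht : t ≤ ε / 2) :
    P.real {ω | ε < ∑ j ∈ s, (ρ j - R j ω / V j ω) ^ 2 + t}
      ≤ s.card * (4 * a + 16 * (M + 1) * a / ε) := by
  set W : Ω → ℝ := fun ω => ∑ j ∈ s, (ρ j ^ 2 * (1 - V j ω) ^ 2 + (ρ j - R j ω) ^ 2)
  have hsub : {ω | ε < ∑ j ∈ s, (ρ j - R j ω / V j ω) ^ 2 + t}
      ⊆ (⋃ j ∈ s, {ω | 1 / 4 < (1 - V j ω) ^ 2}) ∪ {ω | ε / 2 < 8 * W ω} := by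
    intro ω hω
    by_cases hgood : ∀ j ∈ s, (1 - V j ω) ^ 2 ≤ 1 / 4
    · refine Or.inr (show ε / 2 < 8 * W ω from lt_of_lt_of_le ?_ (Finset.mul_sum _ _ _).ge)
      have := Finset.sum_le_sum fun j hj => sq_sub_div_le_of_sq_one_sub_le (ρ := ρ j)
        (a := R j ω) (hgood j hj)
      simp only [Set.mem_ofPred_eq] at hω
      linarith
    · push Not at hgood
      obtain ⟨j, hj, hbad⟩ := hgood
      exact Or.inl (Set.mem_biUnion hj hbad)
  have hW_int : Integrable (fun ω => 8 * W ω) P :=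
    (integrable_finsetSum _ fun j hj => ((hVint j hj).const_mul _).add (hRint j hj)).const_mul _
  have hW_nonneg : ∀ ω, 0 ≤ 8 * W ω := fun ω => by positivity
  have hbad := measureReal_biUnion_lt_le s (fun j ω => sq_nonneg (1 - V j ω)) hVint
    (by norm_num : (0 : ℝ) < 1 / 4) hV
  have hgood := measureReal_lt_le_integral_div hW_nonneg hW_int (by positivity : 0 < ε / 2)
  rw [integral_const_mul] at hgood
  have hW := integral_sum_sq_deviation_le s ρ V R hVint hRint hV hR hρ
  calc P.real {ω | ε < ∑ j ∈ s, (ρ j - R j ω / V j ω) ^ 2 + t}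
      ≤ P.real (⋃ j ∈ s, {ω | 1 / 4 < (1 - V j ω) ^ 2}) + P.real {ω | ε / 2 < 8 * W ω} :=
        (measureReal_mono hsub).trans (measureReal_union_le _ _)
    _ ≤ s.card * (a / (1 / 4)) + 8 * (s.card * ((M + 1) * a)) / (ε / 2) := by
        gcongr
        exact hgood.trans (by gcongr)
    _ = s.card * (4 * a + 16 * (M + 1) * a / ε) := by
        field_simp
        ring

end Markov

theorem stmt10_general {Ω : Type*} [MeasurableSpace Ω] (P : Measure Ω) [IsProbabilityMeasure P]
    (C : ℕ → ℝ) (hCpos : ∀ j, 1 ≤ j → 0 < C j)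
    (hCmono : ∀ i j : ℕ, 1 ≤ i → i ≤ j → C j ≤ C i)
    (hCsum : Summable fun j : ℕ => C (j + 1))
    (ρ : ℕ → ℝ) (hρ2 : Summable fun j : ℕ => ρ (j + 1) ^ 2)
    (η : ℕ → ℕ → Ω → ℝ)
    (K1 K2 : ℕ → ℝ) (hK1 : ∀ j, 0 ≤ K1 j) (hK2 : ∀ j, 0 ≤ K2 j)
    (S : ℝ) (hS : ∀ j, 1 ≤ j → K1 j + K2 j ≤ S)
    (hA41int : ∀ n j : ℕ, 2 ≤ n → 1 ≤ j → Integrable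
      (fun ω => (1 - 1 / (n : ℝ) * ∑ i ∈ Finset.range n, η j i ω ^ 2) ^ 2) P)
    (hA41 : ∀ n j : ℕ, 2 ≤ n → 1 ≤ j →
      ∫ ω, (1 - 1 / (n : ℝ) * ∑ i ∈ Finset.range n, η j i ω ^ 2) ^ 2 ∂P ≤ K1 j / n)
    (hA42int : ∀ n j : ℕ, 2 ≤ n → 1 ≤ j → Integrable
      (fun ω => (ρ j - 1 / ((n : ℝ) - 1) *
        ∑ i ∈ Finset.range (n - 1), η j i ω * η j (i + 1) ω) ^ 2) P)
    (hA42 : ∀ n j : ℕ, 2 ≤ n → 1 ≤ j →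
      ∫ ω, (ρ j - 1 / ((n : ℝ) - 1) *
        ∑ i ∈ Finset.range (n - 1), η j i ω * η j (i + 1) ω) ^ 2 ∂P ≤ K2 j / n)
    (k : ℕ → ℕ) (hk : Tendsto k atTop atTop)
    (hA3 : Tendsto (fun n : ℕ => (n : ℝ) * C (k n) ^ 2) atTop atTop) :
    ∀ ε : ℝ, 0 < ε →
      Tendsto (fun n : ℕ =>
          P {ω | ε < (∑ j ∈ Finset.Icc 1 (k n), (ρ j - rhoHat η n j ω) ^ 2)
                    + ∑' j : ℕ, ρ (k n + 1 + j) ^ 2})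
        atTop (nhds 0) := by
  intro ε hε
  set M := ∑' j, ρ (j + 1) ^ 2
  have hρM : ∀ j, 1 ≤ j → ρ j ^ 2 ≤ M := fun j hj => by
    simpa [Nat.sub_add_cancel hj] using hρ2.le_tsum (j - 1) fun i _ => sq_nonneg _
  have htail : Tendsto (fun n => ∑' j : ℕ, ρ (k n + 1 + j) ^ 2) atTop (𝓝 0) :=
    tendsto_tsum_comp_add_one_add (f := fun j => ρ j ^ 2) hk
  have hbound : ∀ᶠ n : ℕ in atTop,
      P.real {ω | ε < (∑ j ∈ Finset.Icc 1 (k n), (ρ j - rhoHat η n j ω) ^ 2)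
          + ∑' j : ℕ, ρ (k n + 1 + j) ^ 2}
        ≤ (4 * S + 16 * (M + 1) * S / ε) * ((k n : ℝ) / n) := by
    filter_upwards [eventually_ge_atTop 2, (tendsto_order.1 htail).2 (ε / 2) (by positivity)]
      with n hn htail_n
    simp only [rhoHat_eq_empCov_div_empVar]
    have hmem : ∀ j ∈ Finset.Icc 1 (k n), 1 ≤ j := fun j hj => (Finset.mem_Icc.1 hj).1
    have hkey := measureReal_sum_sq_sub_div_gt_le (P := P) (Finset.Icc 1 (k n)) ρ
      (empVar η n) (empCov η n) (a := S / n)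
      (fun j hj => hA41int n j hn (hmem j hj)) (fun j hj => hA42int n j hn (hmem j hj))
      (fun j hj => (hA41 n j hn (hmem j hj)).trans
        (by gcongr; linarith [hK2 j, hS j (hmem j hj)]))
      (fun j hj => (hA42 n j hn (hmem j hj)).trans
        (by gcongr; linarith [hK1 j, hS j (hmem j hj)]))
      (fun j hj => hρM j (hmem j hj)) hε htail_n.le
    refine hkey.trans (le_of_eq ?_)
    simp only [Nat.card_Icc, add_tsub_cancel_right]
    ring
  have hlim := (tendsto_div_atTop_zero_of_tendsto_mul_sq hCpos hCmono hCsum hA3).const_mul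
    (4 * S + 16 * (M + 1) * S / ε)
  rw [mul_zero] at hlim
  rw [← ENNReal.tendsto_toReal_iff (fun _ => measure_ne_top _ _) ENNReal.zero_ne_top,
    ENNReal.toReal_zero]
  exact squeeze_zero' (Eventually.of_forall fun _ => measureReal_nonneg) hbound hlim

/-- in the coordinate ARH(1) estimation model, the squared Hilbert–Schmidt
norm `Z_n = Σ_{j=1}^{k_n} (ρ_j − ρ̂_{n,j})² + Σ_{j>k_n} ρ_j²` converges to `0` in
probability. -/
theorem stmt10 {Ω : Type*} [MeasurableSpace Ω] (P : Measure Ω) [IsProbabilityMeasure P]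
    (C : ℕ → ℝ) (hCpos : ∀ j, 1 ≤ j → 0 < C j)
    (hCmono : ∀ i j : ℕ, 1 ≤ i → i ≤ j → C j ≤ C i)
    (hCsum : Summable fun j : ℕ => C (j + 1))
    (ρ : ℕ → ℝ) (hρ2 : Summable fun j : ℕ => ρ (j + 1) ^ 2)
    (η : ℕ → ℕ → Ω → ℝ) (hηm : ∀ j i, Measurable (η j i))
    (hpos : ∀ j n : ℕ, 1 ≤ j → 1 ≤ n →
      ∀ᵐ ω ∂P, 0 < ∑ i ∈ Finset.range n, η j i ω ^ 2)
    (K1 K2 : ℕ → ℝ) (hK1 : ∀ j, 0 ≤ K1 j) (hK2 : ∀ j, 0 ≤ K2 j)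
    (S : ℝ) (hS : ∀ j, 1 ≤ j → K1 j + K2 j ≤ S)
    (hA41int : ∀ n j : ℕ, 2 ≤ n → 1 ≤ j → Integrable
      (fun ω => (1 - 1 / (n : ℝ) * ∑ i ∈ Finset.range n, η j i ω ^ 2) ^ 2) P)
    (hA41 : ∀ n j : ℕ, 2 ≤ n → 1 ≤ j →
      ∫ ω, (1 - 1 / (n : ℝ) * ∑ i ∈ Finset.range n, η j i ω ^ 2) ^ 2 ∂P ≤ K1 j / n)
    (hA42int : ∀ n j : ℕ, 2 ≤ n → 1 ≤ j → Integrable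
      (fun ω => (ρ j - 1 / ((n : ℝ) - 1) *
        ∑ i ∈ Finset.range (n - 1), η j i ω * η j (i + 1) ω) ^ 2) P)
    (hA42 : ∀ n j : ℕ, 2 ≤ n → 1 ≤ j →
      ∫ ω, (ρ j - 1 / ((n : ℝ) - 1) *
        ∑ i ∈ Finset.range (n - 1), η j i ω * η j (i + 1) ω) ^ 2 ∂P ≤ K2 j / n)
    (k : ℕ → ℕ) (hk : Tendsto k atTop atTop)
    (hA3 : Tendsto (fun n : ℕ => (n : ℝ) * C (k n) ^ 2) atTop atTop) :
    ∀ ε : ℝ, 0 < ε →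
      Tendsto (fun n : ℕ =>
          P {ω | ε < (∑ j ∈ Finset.Icc 1 (k n), (ρ j - rhoHat η n j ω) ^ 2)
                    + ∑' j : ℕ, ρ (k n + 1 + j) ^ 2})
        atTop (nhds 0) :=
  stmt10_general P C hCpos hCmono hCsum ρ hρ2 η K1 K2 hK1 hK2 S hS hA41int hA41 hA42int hA42 k hk
    hA3
end
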